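/- For every p ∈ (0,1) one has 2p(1−p) ≤ √(π/2) · I(p), with equality at p = 1/2; consequently sup_{p∈(0,1)} 2p(1−p)/I(p) = √(π/2). -/

import Mathlib

/-!
Writing `p = Φ(x)`, we have `2p(1-p) = (1 - (2Φ(x) - 1)²) / 2` and
`√(π/2) I(p) = e^{-x²/2} / 2`, so the inequality says `1 - e^{-x²/2} ≤ (2Φ(x) - 1)²`.
The right side is the mass of the square `[-|x|, |x|]²` under the standard Gaussian measure on
`ℝ²`, and the left side is, in polar coordinates, the mass of the inscribed disc of radius `|x|`.
-/

/-- The standard Gaussian distribution function `Φ(x) = (2π)^{-1/2} ∫_{-∞}^x e^{-y²/2} dy`. -/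
noncomputable def stdGaussCDF (x : ℝ) : ℝ :=
  ∫ y in Set.Iic x, Real.exp (-y ^ 2 / 2) / Real.sqrt (2 * Real.pi)

/-- The Gaussian isoperimetric profile `I = φ ∘ Φ⁻¹` on `[0,1]`, with `I(0) = I(1) = 0`. -/
noncomputable def gaussI (p : ℝ) : ℝ :=
  if p = 0 ∨ p = 1 then 0
  else Real.exp (-(Function.invFun stdGaussCDF p) ^ 2 / 2) / Real.sqrt (2 * Real.pi)

open Real Set Filter MeasureTheory ProbabilityTheory

lemma gaussianPDFReal_zero_one : gaussianPDFReal 0 1 = fun x => exp (-x ^ 2 / 2) / √(2 * π) := by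
  ext x
  simp [gaussianPDFReal, div_eq_inv_mul]

lemma continuous_gaussianPDFReal_zero_one : Continuous (gaussianPDFReal 0 1) := by
  rw [gaussianPDFReal_zero_one]
  fun_prop

lemma gaussianPDFReal_zero_one_neg (x : ℝ) :
    gaussianPDFReal 0 1 (-x) = gaussianPDFReal 0 1 x := by
  simp [gaussianPDFReal_zero_one]

lemma stdGaussCDF_eq_integral (x : ℝ) :
    stdGaussCDF x = ∫ y in Iic x, gaussianPDFReal 0 1 y := by
  rw [gaussianPDFReal_zero_one, stdGaussCDF]

lemma stdGaussCDF_sub_stdGaussCDF (x y : ℝ) :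
    stdGaussCDF y - stdGaussCDF x = ∫ t in x..y, gaussianPDFReal 0 1 t := by
  rw [stdGaussCDF_eq_integral, stdGaussCDF_eq_integral, intervalIntegral.integral_Iic_sub_Iic
    (integrable_gaussianPDFReal 0 1).integrableOn (integrable_gaussianPDFReal 0 1).integrableOn]

lemma stdGaussCDF_eq_cdf : stdGaussCDF = cdf (gaussianReal 0 1) := by
  ext x
  rw [cdf_eq_real, measureReal_def, gaussianReal_apply_eq_integral _ one_ne_zero,
    ENNReal.toReal_ofReal (setIntegral_nonneg measurableSet_Iic fun _ _ =>
      gaussianPDFReal_nonneg _ _ _), stdGaussCDF_eq_integral]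

lemma hasDerivAt_stdGaussCDF (x : ℝ) : HasDerivAt stdGaussCDF (gaussianPDFReal 0 1 x) x := by
  have hFTC := (continuous_gaussianPDFReal_zero_one.integral_hasStrictDerivAt 0 x).hasDerivAt
  refine (hFTC.const_add (stdGaussCDF 0)).congr_of_eventuallyEq (Eventually.of_forall fun y => ?_)
  dsimp only
  rw [← stdGaussCDF_sub_stdGaussCDF]
  ring

lemma continuous_stdGaussCDF : Continuous stdGaussCDF :=
  continuous_iff_continuousAt.2 fun x => (hasDerivAt_stdGaussCDF x).continuousAt

lemma strictMono_stdGaussCDF : StrictMono stdGaussCDF :=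
  strictMono_of_hasDerivAt_pos hasDerivAt_stdGaussCDF fun x => gaussianPDFReal_pos 0 1 x one_ne_zero

lemma stdGaussCDF_mem_Ioo (x : ℝ) : stdGaussCDF x ∈ Ioo 0 1 := by
  have hnonneg : 0 ≤ stdGaussCDF (x - 1) := stdGaussCDF_eq_cdf ▸ cdf_nonneg _ _
  have hle_one : stdGaussCDF (x + 1) ≤ 1 := stdGaussCDF_eq_cdf ▸ cdf_le_one _ _
  exact ⟨hnonneg.trans_lt (strictMono_stdGaussCDF (by linarith)),
    (strictMono_stdGaussCDF (by linarith)).trans_le hle_one⟩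

lemma stdGaussCDF_neg (x : ℝ) : stdGaussCDF (-x) = 1 - stdGaussCDF x := by
  have hIoi : stdGaussCDF (-x) = ∫ y in Ioi x, gaussianPDFReal 0 1 y := by
    rw [stdGaussCDF_eq_integral, ← neg_neg x, ← integral_comp_neg_Iic, neg_neg]
    simp_rw [gaussianPDFReal_zero_one_neg]
  have htotal := intervalIntegral.integral_Iic_add_Ioi (b := x)
    (integrable_gaussianPDFReal 0 1).integrableOn (integrable_gaussianPDFReal 0 1).integrableOn
  rw [integral_gaussianPDFReal_eq_one 0 one_ne_zero, ← stdGaussCDF_eq_integral] at htotal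
  linarith

lemma stdGaussCDF_zero : stdGaussCDF 0 = 1 / 2 := by
  have h := stdGaussCDF_neg 0
  rw [neg_zero] at h
  linarith

lemma Ioo_subset_range_stdGaussCDF : Ioo 0 1 ⊆ range stdGaussCDF := by
  intro p hp
  have hbot : Tendsto stdGaussCDF atBot (nhds 0) := stdGaussCDF_eq_cdf ▸ tendsto_cdf_atBot _
  have htop : Tendsto stdGaussCDF atTop (nhds 1) := stdGaussCDF_eq_cdf ▸ tendsto_cdf_atTop _
  obtain ⟨a, ha⟩ := (hbot.eventually_lt_const hp.1).exists
  obtain ⟨b, hb⟩ := (htop.eventually_const_lt hp.2).exists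
  exact intermediate_value_univ a b continuous_stdGaussCDF ⟨ha.le, hb.le⟩

lemma two_mul_stdGaussCDF_sub_one (x : ℝ) :
    2 * stdGaussCDF x - 1 = (∫ t in -x..x, exp (-t ^ 2 / 2)) / √(2 * π) := by
  rw [← intervalIntegral.integral_div, ← gaussianPDFReal_zero_one, ← stdGaussCDF_sub_stdGaussCDF,
    stdGaussCDF_neg]
  ring

theorem integral_exp_neg_sq_div_two_disc {r : ℝ} (hr : 0 ≤ r) :
    ∫ p in {p : ℝ × ℝ | p.1 ^ 2 + p.2 ^ 2 ≤ r ^ 2}, exp (-(p.1 ^ 2 + p.2 ^ 2) / 2)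
      = 2 * π * (1 - exp (-r ^ 2 / 2)) := by
  have hmeas : MeasurableSet {p : ℝ × ℝ | p.1 ^ 2 + p.2 ^ 2 ≤ r ^ 2} :=
    measurableSet_le (by fun_prop) measurable_const
  rw [← integral_indicator hmeas, ← integral_comp_polarCoord_symm]
  -- The factor `1` is the angular integrand, so that the integral splits as a product.
  have hpolar : ∀ q ∈ polarCoord.target,
      q.1 • {p : ℝ × ℝ | p.1 ^ 2 + p.2 ^ 2 ≤ r ^ 2}.indicator
        (fun p => exp (-(p.1 ^ 2 + p.2 ^ 2) / 2)) (polarCoord.symm q)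
      = (Iic r).indicator (fun ρ => ρ * exp (-ρ ^ 2 / 2)) q.1 * (1 : ℝ) := by
    rintro ⟨ρ, θ⟩ ⟨hρ, -⟩
    have hsq : (ρ * cos θ) ^ 2 + (ρ * sin θ) ^ 2 = ρ ^ 2 := by
      linear_combination ρ ^ 2 * sin_sq_add_cos_sq θ
    have hle : ρ ^ 2 ≤ r ^ 2 ↔ ρ ≤ r := pow_le_pow_iff_left₀ (le_of_lt hρ) hr two_ne_zero
    simp only [polarCoord_symm_apply, indicator, mem_ofPred_eq, hsq, hle, mem_Iic, smul_eq_mul,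
      mul_one]
    split_ifs <;> simp
  rw [setIntegral_congr_fun polarCoord.open_target.measurableSet hpolar, polarCoord_target,
    Measure.volume_eq_prod,
    setIntegral_prod_mul (μ := volume) (ν := volume) _ (fun _ => (1 : ℝ)),
    integral_const, setIntegral_indicator measurableSet_Iic, Ioi_inter_Iic,
    ← intervalIntegral.integral_of_le hr]
  have hderiv : ∀ ρ ∈ uIcc 0 r,
      HasDerivAt (fun ρ => -exp (-ρ ^ 2 / 2)) (ρ * exp (-ρ ^ 2 / 2)) ρ := by
    intro ρ _
    have hexponent : HasDerivAt (fun ρ : ℝ => -ρ ^ 2 / 2) (-ρ) ρ := by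
      simpa [neg_div] using ((hasDerivAt_pow 2 ρ).div_const 2).fun_neg
    simpa [mul_comm] using hexponent.exp.fun_neg
  rw [intervalIntegral.integral_eq_sub_of_hasDerivAt hderiv
    ((by fun_prop : Continuous fun ρ : ℝ => ρ * exp (-ρ ^ 2 / 2)).intervalIntegrable _ _),
    measureReal_restrict_apply_univ, volume_real_Ioo_of_le (by linarith [pi_pos]), smul_eq_mul,
    mul_one]
  norm_num
  ring

theorem two_pi_mul_one_sub_exp_le_sq_integral (a : ℝ) :
    2 * π * (1 - exp (-a ^ 2 / 2)) ≤ (∫ t in -a..a, exp (-t ^ 2 / 2)) ^ 2 := by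
  wlog ha : 0 ≤ a generalizing a
  · simpa [intervalIntegral.integral_symm a] using this (-a) (by linarith)
  have hsquare : (∫ t in -a..a, exp (-t ^ 2 / 2)) ^ 2
      = ∫ p in Icc (-a) a ×ˢ Icc (-a) a, exp (-(p.1 ^ 2 + p.2 ^ 2) / 2) := by
    rw [intervalIntegral.integral_of_le (by linarith), ← integral_Icc_eq_integral_Ioc, sq,
      Measure.volume_eq_prod, ← setIntegral_prod_mul]
    congr with p
    rw [← exp_add]
    ring_nf
  have hdisc : {p : ℝ × ℝ | p.1 ^ 2 + p.2 ^ 2 ≤ a ^ 2} ⊆ Icc (-a) a ×ˢ Icc (-a) a := by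
    intro p (hp : p.1 ^ 2 + p.2 ^ 2 ≤ a ^ 2)
    exact ⟨abs_le_of_sq_le_sq' (by nlinarith [sq_nonneg p.2]) ha,
      abs_le_of_sq_le_sq' (by nlinarith [sq_nonneg p.1]) ha⟩
  rw [hsquare, ← integral_exp_neg_sq_div_two_disc ha]
  exact setIntegral_mono_set
    ((by fun_prop : Continuous fun p : ℝ × ℝ => exp (-(p.1 ^ 2 + p.2 ^ 2) / 2)).continuousOn
      |>.integrableOn_compact (isCompact_Icc.prod isCompact_Icc))
    (Eventually.of_forall fun _ => (exp_pos _).le) hdisc.eventuallyLE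

lemma sqrt_two_mul_pi : √(2 * π) = 2 * √(π / 2) := by
  rw [show 2 * π = 2 ^ 2 * (π / 2) by ring, sqrt_mul (by positivity), sqrt_sq zero_le_two]

lemma gaussI_stdGaussCDF (x : ℝ) : gaussI (stdGaussCDF x) = exp (-x ^ 2 / 2) / √(2 * π) := by
  obtain ⟨hpos, hlt⟩ := stdGaussCDF_mem_Ioo x
  rw [gaussI, if_neg (by rintro (h | h) <;> linarith),
    Function.leftInverse_invFun strictMono_stdGaussCDF.injective x]

lemma gaussI_half : gaussI (1 / 2) = 1 / √(2 * π) := by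
  rw [← stdGaussCDF_zero, gaussI_stdGaussCDF]
  simp

lemma gaussI_pos {p : ℝ} (hp : p ∈ Ioo 0 1) : 0 < gaussI p := by
  obtain ⟨x, rfl⟩ := Ioo_subset_range_stdGaussCDF hp
  rw [gaussI_stdGaussCDF]
  positivity

lemma one_le_sq_two_mul_stdGaussCDF_sub_one_add_exp (x : ℝ) :
    1 ≤ (2 * stdGaussCDF x - 1) ^ 2 + exp (-x ^ 2 / 2) := by
  rw [two_mul_stdGaussCDF_sub_one, div_pow, sq_sqrt (by positivity), ← sub_le_iff_le_add,
    le_div_iff₀ (by positivity)]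
  linarith [two_pi_mul_one_sub_exp_le_sq_integral x]

lemma two_mul_stdGaussCDF_mul_one_sub_le (x : ℝ) :
    2 * stdGaussCDF x * (1 - stdGaussCDF x) ≤ √(π / 2) * gaussI (stdGaussCDF x) := by
  have hkey := one_le_sq_two_mul_stdGaussCDF_sub_one_add_exp x
  have hhalf : √(π / 2) * (exp (-x ^ 2 / 2) / (2 * √(π / 2))) = exp (-x ^ 2 / 2) / 2 := by
    field_simp
  rw [gaussI_stdGaussCDF, sqrt_two_mul_pi, hhalf]
  nlinarith

/-- For every `p ∈ (0,1)` one has `2p(1−p) ≤ √(π/2)·I(p)`, with equality at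
`p = 1/2`; consequently `sup_{p∈(0,1)} 2p(1−p)/I(p) = √(π/2)`. -/
theorem ratio_to_isoperimetric_profile :
    (∀ p ∈ Set.Ioo (0 : ℝ) 1, 2 * p * (1 - p) ≤ Real.sqrt (Real.pi / 2) * gaussI p) ∧
    2 * (1 / 2 : ℝ) * (1 - 1 / 2) = Real.sqrt (Real.pi / 2) * gaussI (1 / 2) ∧
    sSup ((fun p => 2 * p * (1 - p) / gaussI p) '' Set.Ioo 0 1)
      = Real.sqrt (Real.pi / 2) := by
  have hbound : ∀ p ∈ Ioo (0 : ℝ) 1, 2 * p * (1 - p) ≤ √(π / 2) * gaussI p := by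
    intro p hp
    obtain ⟨x, rfl⟩ := Ioo_subset_range_stdGaussCDF hp
    exact two_mul_stdGaussCDF_mul_one_sub_le x
  have hhalf : 2 * (1 / 2 : ℝ) * (1 - 1 / 2) = √(π / 2) * gaussI (1 / 2) := by
    rw [gaussI_half, sqrt_two_mul_pi]
    field_simp
    norm_num
  refine ⟨hbound, hhalf, IsGreatest.csSup_eq ⟨⟨1 / 2, by norm_num, ?_⟩, ?_⟩⟩
  · dsimp only
    rw [hhalf, mul_div_cancel_right₀ _ (gaussI_pos (by norm_num)).ne']
  · rintro _ ⟨p, hp, rfl⟩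
    exact div_le_of_le_mul₀ (gaussI_pos hp).le (sqrt_nonneg _) (hbound p hp)
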